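/- arXiv:2403.06868 — 3 statements merged into one kernel-verified Lean document; each statement's English description precedes it below -/
import Mathlib

section
/- Let n ≥ 1 and let λ = (λ₁, …, λ_ℓ) be a partition of n (positive integers in nonincreasing order summing to n) with λ ≠ (n). Then 4·∑ₖ λₖ³ − (3/n)·(∑ₖ λₖ²)² < n³. -/
/-!
Put `s = ∑ xᵢ`, `p₂ = ∑ xᵢ²`, `p₃ = ∑ xᵢ³` and `D = s⁴ + 3 p₂² - 4 s p₃`. In monomial symmetric
functions `D = 12 (m₂₂ + m₂₁₁ + 2 m₁₁₁₁)`, so `D ≥ 0` for nonnegative `xᵢ`, with equality for a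
single part. Concretely, adjoining a part `x` to a list with sum `s` raises `D` by
`6 x² (s² + p₂) + 4 x (s³ - p₃) ≥ 6 x² s²`, which is positive once there are two positive parts.
Dividing `D > 0` by `n = s` gives the inequality.
-/

namespace List

variable {R : Type*}

theorem sum_map_pow_le_pow_sum [Semiring R] [PartialOrder R] [IsOrderedRing R]
    {l : List R} (hl : ∀ x ∈ l, 0 ≤ x) {m : ℕ} (hm : m ≠ 0) :
    (l.map (· ^ m)).sum ≤ l.sum ^ m := by
  induction l with
  | nil => simp [hm]
  | cons x t ih =>
    have hx : 0 ≤ x := hl x mem_cons_self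
    have ht : ∀ y ∈ t, 0 ≤ y := fun y hy => hl y (mem_cons_of_mem x hy)
    calc ((x :: t).map (· ^ m)).sum = x ^ m + (t.map (· ^ m)).sum := by simp
      _ ≤ x ^ m + t.sum ^ m := by gcongr; exact ih ht
      _ ≤ (x :: t).sum ^ m := by rw [sum_cons]; exact pow_add_pow_le hx (sum_nonneg ht) hm

variable [CommRing R]

def quarticDefect (l : List R) : R :=
  l.sum ^ 4 + 3 * (l.map (· ^ 2)).sum ^ 2 - 4 * l.sum * (l.map (· ^ 3)).sum

theorem quarticDefect_cons (x : R) (t : List R) :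
    quarticDefect (x :: t) = quarticDefect t
      + 6 * x ^ 2 * (t.sum ^ 2 + (t.map (· ^ 2)).sum)
      + 4 * x * (t.sum ^ 3 - (t.map (· ^ 3)).sum) := by
  simp only [quarticDefect, sum_cons, map_cons]
  ring

variable [LinearOrder R] [IsStrictOrderedRing R]

theorem le_quarticDefect_cons {x : R} {t : List R} (hx : 0 ≤ x) (ht : ∀ y ∈ t, 0 ≤ y) :
    quarticDefect t + 6 * x ^ 2 * t.sum ^ 2 ≤ quarticDefect (x :: t) := by
  have hp₂ : 0 ≤ (t.map (· ^ 2)).sum := sum_nonneg (by simp [sq_nonneg])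
  have hp₃ : (t.map (· ^ 3)).sum ≤ t.sum ^ 3 := sum_map_pow_le_pow_sum ht (by norm_num)
  have h₂ : 6 * x ^ 2 * t.sum ^ 2 ≤ 6 * x ^ 2 * (t.sum ^ 2 + (t.map (· ^ 2)).sum) := by
    gcongr
    exact le_add_of_nonneg_right hp₂
  have h₃ : 0 ≤ 4 * x * (t.sum ^ 3 - (t.map (· ^ 3)).sum) :=
    mul_nonneg (by positivity) (sub_nonneg.2 hp₃)
  rw [quarticDefect_cons]
  linarith

theorem quarticDefect_nonneg {l : List R} (hl : ∀ x ∈ l, 0 ≤ x) : 0 ≤ quarticDefect l := by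
  induction l with
  | nil => simp [quarticDefect]
  | cons x t ih =>
    have ht : ∀ y ∈ t, 0 ≤ y := fun y hy => hl y (mem_cons_of_mem x hy)
    have hstep := le_quarticDefect_cons (hl x mem_cons_self) ht
    have hgain : 0 ≤ 6 * x ^ 2 * t.sum ^ 2 := by positivity
    linarith [ih ht]

theorem quarticDefect_pos {l : List R} (hl : ∀ x ∈ l, 0 < x) (hlen : 2 ≤ l.length) :
    0 < quarticDefect l := by
  obtain ⟨x, t, rfl⟩ : ∃ x t, l = x :: t := exists_cons_of_length_pos (by omega)
  have hx : 0 < x := hl x mem_cons_self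
  have ht : ∀ y ∈ t, 0 < y := fun y hy => hl y (mem_cons_of_mem x hy)
  have hs : 0 < t.sum := sum_pos t ht (ne_nil_of_length_pos (by simp at hlen; omega))
  have hstep := le_quarticDefect_cons hx.le fun y hy => (ht y hy).le
  have htail := quarticDefect_nonneg fun y hy => (ht y hy).le
  have hgain : 0 < x ^ 2 * t.sum ^ 2 := by positivity
  linarith

end List

theorem stmt1_general (n : ℕ) (hn : 1 ≤ n) (l : List ℕ)
    (hpos : ∀ a ∈ l, 0 < a) (hsum : l.sum = n)
    (hne : l ≠ [n]) :
    4 * ((l.map (fun k => (k : ℝ) ^ 3)).sum)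
      - (3 / (n : ℝ)) * ((l.map (fun k => (k : ℝ) ^ 2)).sum) ^ 2 < (n : ℝ) ^ 3 := by
  have hlen : 2 ≤ l.length := by
    rcases l with _ | ⟨_, _ | ⟨_, _⟩⟩
    · simp at hsum; omega
    · simp_all
    · simp
  -- the coercion `List ℕ → List ℝ` is the monad lift `l >>= pure ∘ Nat.cast`
  have hL : (l : List ℝ) = l.map (↑) := bind_pure_comp _ _
  have hD := List.quarticDefect_pos (l := (l : List ℝ))
    (by rw [hL, List.forall_mem_map]; simpa using hpos)
    (by simpa [hL] using hlen)
  have hLsum : (l : List ℝ).sum = n := by rw [hL, ← Nat.cast_list_sum, hsum]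
  rw [List.quarticDefect, hLsum] at hD
  have hn' : (0 : ℝ) < n := by exact_mod_cast hn
  rw [sub_lt_iff_lt_add, ← sub_lt_iff_lt_add', div_mul_eq_mul_div, lt_div_iff₀ hn']
  linarith

/-- For a partition `λ ⊢ n` with `λ ≠ (n)`:
`4 ∑ λₖ³ − (3/n) (∑ λₖ²)² < n³`. -/
theorem stmt1 (n : ℕ) (hn : 1 ≤ n) (l : List ℕ)
    (hpos : ∀ a ∈ l, 0 < a) (hsort : l.Pairwise (· ≥ ·)) (hsum : l.sum = n)
    (hne : l ≠ [n]) :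
    4 * ((l.map (fun k => (k : ℝ) ^ 3)).sum)
      - (3 / (n : ℝ)) * ((l.map (fun k => (k : ℝ) ^ 2)).sum) ^ 2 < (n : ℝ) ^ 3 :=
  stmt1_general n hn l hpos hsum hne
end

section
/- The only permutation σ of {1,…,n} with the property that σ(α) ≠ σ(β) + 1 for all pairs 1 ≤ β < α ≤ n is the reversal σ(i) = n + 1 − i. -/
/-- The only permutation of `{1,…,n}` with `σ(α) ≠ σ(β) + 1` for all `β < α`
is the reversal `σ(i) = n + 1 − i`. -/
theorem stmt8 (n : ℕ) (hn : 1 ≤ n) (σ : Equiv.Perm (Fin n))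
    (h : ∀ β α : Fin n, β < α → (σ α : ℕ) ≠ (σ β : ℕ) + 1) :
    ∀ i : Fin n, σ i = i.rev := by
  -- Step: preimage of k+1 is below preimage of k
  have step : ∀ k : ℕ, ∀ hk : k + 1 < n,
      σ.symm ⟨k + 1, hk⟩ < σ.symm ⟨k, Nat.lt_of_succ_lt hk⟩ := by
    intro k hk
    rcases lt_trichotomy (σ.symm ⟨k + 1, hk⟩) (σ.symm ⟨k, Nat.lt_of_succ_lt hk⟩)
      with h1 | h1 | h1
    · exact h1
    · exfalso
      have := congrArg σ h1
      simp only [Equiv.apply_symm_apply] at this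
      exact absurd (congrArg Fin.val this) (by simp)
    · exfalso
      exact h _ _ h1 (by simp)
  -- σ.symm is strictly antitone
  have key : ∀ d k : ℕ, ∀ hk : k + d + 1 < n,
      σ.symm ⟨k + d + 1, hk⟩ < σ.symm ⟨k, by omega⟩ := by
    intro d
    induction d with
    | zero => intro k hk; exact step k hk
    | succ d ih =>
        intro k hk
        have h1 : σ.symm ⟨k + (d + 1) + 1, hk⟩ < σ.symm ⟨k + d + 1, by omega⟩ := by
          have := step (k + d + 1) (by omega)
          convert this using 3 <;> omega
        exact lt_trans h1 (ih k (by omega))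
  have anti : StrictAnti (fun i : Fin n => σ.symm i) := by
    intro a b hab
    have hb : (b : ℕ) = (a : ℕ) + ((b : ℕ) - (a : ℕ) - 1) + 1 := by
      have := (Fin.lt_iff_val_lt_val.mp hab); omega
    have := key ((b : ℕ) - (a : ℕ) - 1) (a : ℕ) (by omega)
    convert this using 3
    all_goals first | rfl | exact Fin.ext hb
  -- so i ↦ (σ.symm i).rev is a strictly monotone bijection, hence the identity
  have mono : StrictMono (fun i : Fin n => (σ.symm i).rev) := by
    intro a b hab
    exact Fin.rev_lt_rev.mpr (anti hab)
  have hsurj : Function.Surjective (fun i : Fin n => (σ.symm i).rev) := by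
    intro y
    exact ⟨σ y.rev, by simp⟩
  have hid : ∀ i : Fin n, (σ.symm i).rev = i := by
    intro i
    have h2 : (StrictMono.orderIsoOfSurjective _ mono hsurj) i
        = (OrderIso.refl (Fin n)) i := by
      rw [Subsingleton.elim (StrictMono.orderIsoOfSurjective _ mono hsurj)
        (OrderIso.refl (Fin n))]
    simpa using h2
  intro i
  have := hid (σ i)
  simp only [Equiv.symm_apply_apply] at this
  exact this.symm
end

section
/- The map f sending a pair (λ, i), where λ ⊢ n is written with distinct part sizes a₁ > ⋯ > a_s and i ∈ {1,…,s+1}, to the pair (λ̄, j), where λ̄ ⊢ n+1 is obtained by adding 1 to the (M_{λ,i−1}+1)-th component of λ (with M_{λ,0}=0, M_{λ,k}=m_{a₁}+⋯+m_{aₖ}, and i = s+1 corresponding to appending a new part 1) and j is the unique index with M_{λ̄,j} = M_{λ,i−1}+1, is a bijection from {(λ,i) : λ ⊢ n, 1 ≤ i ≤ s(λ)+1} onto {(λ̄,j) : λ̄ ⊢ n+1, 1 ≤ j ≤ r(λ̄)}. -/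
/-! Write `λ = A ++ v :: B` with `A > v ≥ B`, so that `v` is the `i`-th largest part of `λ` and
its first occurrence is the component that is raised. Then `λ̄ = A ++ (v + 1) :: B` with
`A ≥ v + 1 > B`: the raised component is the last occurrence of `v + 1`, which is the `j`-th
largest part of `λ̄`. So `(λ̄, j)` determines `v + 1`, hence the split `A, B` and `(λ, i)`: lowering
the last occurrence of the `j`-th largest part of `λ̄` (deleting it if it is `1`) inverts the map. -/

/-- `l` is a partition of `n`: a nonincreasing list of positive integers summing to `n`.
Its distinct part sizes, in decreasing order, are given by `l.dedup`, so the number of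
distinct part sizes is `l.dedup.length`. -/
def IsPartitionOf (n : ℕ) (l : List ℕ) : Prop :=
  (∀ a ∈ l, 0 < a) ∧ l.Pairwise (· ≥ ·) ∧ l.sum = n

/-- Add `1` to the component of `l` at (0-based) position `pos`, appending a new part `1`
if `pos` is past the end of `l`. -/
def addOneAt (l : List ℕ) (pos : ℕ) : List ℕ :=
  if pos < l.length then l.set pos (l.getD pos 0 + 1) else l ++ [1]

/-- The map `f` of the paper: given `(λ, i)` with `λ ⊢ n` written with distinct part sizes
`a₁ > ⋯ > a_s` and `1 ≤ i ≤ s+1`, add `1` to the `(M_{λ,i−1}+1)`-th component of `λ`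
(the first occurrence of the `i`-th largest distinct part; `i = s+1` appends a new part `1`),
obtaining `λ̄ ⊢ n+1`, paired with the unique `j` such that `M_{λ̄,j} = M_{λ,i−1}+1`,
i.e. `j` is the number of distinct values among the first `M_{λ,i−1}+1` entries of `λ̄`. -/
def partMap (l : List ℕ) (i : ℕ) : List ℕ × ℕ :=
  let v : ℕ := l.dedup.getD (i - 1) 0
  let pos : ℕ := l.countP (fun a => decide (v < a))
  let lbar : List ℕ := addOneAt l pos
  (lbar, ((lbar.take (pos + 1)).dedup).length)

namespace List

variable {α : Type*}

theorem getLast?_dedup_append_singleton [DecidableEq α] (l : List α) (c : α) :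
    (l ++ [c]).dedup.getLast? = some c := by
  induction l with
  | nil => simp
  | cons x l ih =>
    by_cases hx : x ∈ l ++ [c]
    · rwa [cons_append, dedup_cons_of_mem hx]
    · rw [cons_append, dedup_cons_of_notMem hx, getLast?_cons, ih]
      rfl

variable [LinearOrder α]

theorem Pairwise.exists_eq_append_cons_of_lt_of_le {l : List α} (hl : l.Pairwise (· ≥ ·))
    {v : α} (hv : v ∈ l) :
    ∃ A B, l = A ++ v :: B ∧ (∀ a ∈ A, v < a) ∧ ∀ b ∈ B, b ≤ v := by
  induction l with
  | nil => simp at hv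
  | cons x l ih =>
    rw [pairwise_cons] at hl
    by_cases hvx : v < x
    · have hvl : v ∈ l := by
        rcases mem_cons.1 hv with rfl | h
        · exact absurd hvx (lt_irrefl v)
        · exact h
      obtain ⟨A, B, rfl, hA, hB⟩ := ih hl.2 hvl
      refine ⟨x :: A, B, rfl, ?_, hB⟩
      simpa [hvx] using hA
    · have hxv : x = v := by
        rcases mem_cons.1 hv with rfl | h
        · rfl
        · exact le_antisymm (not_lt.1 hvx) (hl.1 v h)
      subst hxv
      exact ⟨[], l, rfl, by simp, hl.1⟩

theorem Pairwise.exists_eq_append_cons_of_le_of_lt {l : List α} (hl : l.Pairwise (· ≥ ·))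
    {c : α} (hc : c ∈ l) :
    ∃ A B, l = A ++ c :: B ∧ (∀ a ∈ A, c ≤ a) ∧ ∀ b ∈ B, b < c := by
  induction l with
  | nil => simp at hc
  | cons x l ih =>
    rw [pairwise_cons] at hl
    by_cases hcl : c ∈ l
    · obtain ⟨A, B, rfl, hA, hB⟩ := ih hl.2 hcl
      refine ⟨x :: A, B, rfl, ?_, hB⟩
      simpa [hl.1 c hcl] using hA
    · have hxc : x = c := by
        rcases mem_cons.1 hc with rfl | h
        · rfl
        · exact absurd h hcl
      subst hxc
      exact ⟨[], l, rfl, by simp, fun b hb =>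
        lt_of_le_of_ne (hl.1 b hb) (by rintro rfl; exact hcl hb)⟩

theorem getElem?_dedup_append_cons {A B : List α} {c : α} (hA : ∀ a ∈ A, c ≤ a)
    (hB : ∀ b ∈ B, b < c) :
    (A ++ c :: B).dedup[(A ++ [c]).dedup.length - 1]? = some c := by
  have hdisj : (A ++ [c]).Disjoint B := by
    intro x hx hxB
    have := hB x hxB
    rcases mem_append.1 hx with h | h
    · exact absurd (hA x h) (not_le.2 this)
    · rw [mem_singleton] at h
      exact lt_irrefl c (h ▸ this)
  have hne : (A ++ [c]).dedup ≠ [] := by simp [dedup_eq_nil]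
  rw [show A ++ c :: B = (A ++ [c]) ++ B by simp, hdisj.dedup_append,
    getElem?_append_left (by have := length_pos_iff.2 hne; omega), ← getLast?_eq_getElem?,
    getLast?_dedup_append_singleton]

theorem pairwise_ge_append_cons_iff {A B : List α} {x : α} (hA : ∀ a ∈ A, x ≤ a)
    (hB : ∀ b ∈ B, b ≤ x) :
    (A ++ x :: B).Pairwise (· ≥ ·) ↔ A.Pairwise (· ≥ ·) ∧ B.Pairwise (· ≥ ·) := by
  simp only [pairwise_append, pairwise_cons, mem_cons]
  constructor
  · exact fun h => ⟨h.1, h.2.1.2⟩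
  · rintro ⟨hA', hB'⟩
    refine ⟨hA', ⟨hB, hB'⟩, fun a ha b hb => ?_⟩
    rcases hb with rfl | hb
    · exact hA a ha
    · exact (hB b hb).trans (hA a ha)

theorem Pairwise.exists_eq_append_cons_of_le_dedup_length {μ : List α}
    (hμ : μ.Pairwise (· ≥ ·)) {j : ℕ} (hj₁ : 1 ≤ j) (hj₂ : j ≤ μ.dedup.length) :
    ∃ A c B, μ = A ++ c :: B ∧ (∀ a ∈ A, c ≤ a) ∧ (∀ b ∈ B, b < c) ∧
      j = (A ++ [c]).dedup.length := by
  have hj : j - 1 < μ.dedup.length := by omega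
  obtain ⟨A, B, hsplit, hA, hB⟩ :=
    hμ.exists_eq_append_cons_of_le_of_lt (mem_dedup.1 (getElem_mem hj))
  refine ⟨A, _, B, hsplit, hA, hB, ?_⟩
  have hidx := getElem?_dedup_append_cons hA hB
  rw [← hsplit, getElem?_eq_some_iff] at hidx
  obtain ⟨hlt, heq⟩ := hidx
  have := (nodup_dedup μ).getElem_inj_iff.1 heq
  have : 0 < (A ++ [μ.dedup[j - 1]]).dedup.length :=
    length_pos_iff.2 (by simp [dedup_eq_nil])
  omega

end List

open List

theorem isPartitionOf_append_one_iff {n : ℕ} {l : List ℕ} :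
    IsPartitionOf n l ↔ IsPartitionOf (n + 1) (l ++ [1]) := by
  simp only [IsPartitionOf, mem_append, mem_singleton, pairwise_append, pairwise_singleton,
    sum_append, sum_singleton, forall_eq, true_and]
  constructor
  · rintro ⟨hpos, hl, rfl⟩
    exact ⟨fun a ha => ha.elim (hpos a) (fun h => h ▸ Nat.one_pos), ⟨hl, hpos⟩, rfl⟩
  · rintro ⟨hpos, ⟨hl, -⟩, hsum⟩
    exact ⟨fun a ha => hpos a (Or.inl ha), hl, by omega⟩

theorem isPartitionOf_append_cons_iff {n v : ℕ} {A B : List ℕ} (hA : ∀ a ∈ A, v < a)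
    (hB : ∀ b ∈ B, b ≤ v) (hv : 0 < v) :
    IsPartitionOf n (A ++ v :: B) ↔ IsPartitionOf (n + 1) (A ++ (v + 1) :: B) := by
  simp only [IsPartitionOf, pairwise_ge_append_cons_iff (fun a ha => (hA a ha).le) hB,
    pairwise_ge_append_cons_iff hA (fun b hb => (hB b hb).trans v.le_succ)]
  simp only [mem_append, mem_cons, sum_append, sum_cons]
  constructor
  · rintro ⟨hpos, hs, hsum⟩
    refine ⟨fun a ha => ?_, hs, by omega⟩
    rcases ha with ha | rfl | hb
    · exact hpos a (Or.inl ha)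
    · exact v.succ_pos
    · exact hpos a (Or.inr (Or.inr hb))
  · rintro ⟨hpos, hs, hsum⟩
    refine ⟨fun a ha => ?_, hs, by omega⟩
    rcases ha with ha | rfl | hb
    · exact hpos a (Or.inl ha)
    · exact hv
    · exact hpos a (Or.inr (Or.inr hb))

theorem partMap_append_cons {A B : List ℕ} {v i : ℕ} (hA : ∀ a ∈ A, v < a)
    (hB : ∀ b ∈ B, b ≤ v) (hi : (A ++ v :: B).dedup.getD (i - 1) 0 = v) :
    partMap (A ++ v :: B) i = (A ++ (v + 1) :: B, (A ++ [v + 1]).dedup.length) := by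
  have hpos : (A ++ v :: B).countP (fun a => decide (v < a)) = A.length := by
    rw [countP_append, countP_cons_of_neg (by simp),
      countP_eq_length.2 (by simpa using hA), countP_eq_zero.2 (by simpa using hB), add_zero]
  have hadd : addOneAt (A ++ v :: B) A.length = A ++ (v + 1) :: B := by
    simp [addOneAt]
  simp only [partMap, hi, hpos, hadd]
  simp [take_append, take_of_length_le]

/-- The index `s(l) + 1` reads the default `0` past the end of `l.dedup`, and every part exceeds
it. -/
theorem partMap_dedup_length_add_one {l : List ℕ} (hl : ∀ a ∈ l, 0 < a) :
    partMap l (l.dedup.length + 1) = (l ++ [1], (l ++ [1]).dedup.length) := by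
  have hpos : l.countP (fun a => decide (0 < a)) = l.length :=
    countP_eq_length.2 (by simpa using hl)
  simp [partMap, hpos, addOneAt, take_of_length_le]

/-- When `c = 1` the removed part leaves `c - 1 = 0 ∉ l`, so `idxOf` returns `l.dedup.length`
and the index is `s(l) + 1`. -/
def partUnmap (μ : List ℕ) (j : ℕ) : List ℕ × ℕ :=
  let c : ℕ := μ.dedup.getD (j - 1) 0
  let k : ℕ := μ.countP (fun a => decide (c ≤ a))
  let l : List ℕ := if c = 1 then μ.take (k - 1) else μ.set (k - 1) (c - 1)
  (l, l.dedup.idxOf (c - 1) + 1)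

theorem getD_dedup_append_cons {A B : List ℕ} {c : ℕ} (hA : ∀ a ∈ A, c ≤ a)
    (hB : ∀ b ∈ B, b < c) : (A ++ c :: B).dedup.getD ((A ++ [c]).dedup.length - 1) 0 = c := by
  rw [getD_eq_getElem?_getD, getElem?_dedup_append_cons hA hB, Option.getD_some]

theorem partUnmap_append_cons {A B : List ℕ} {v : ℕ} (hA : ∀ a ∈ A, v < a)
    (hB : ∀ b ∈ B, b ≤ v) (hv : 0 < v) :
    partUnmap (A ++ (v + 1) :: B) (A ++ [v + 1]).dedup.length =
      (A ++ v :: B, (A ++ v :: B).dedup.idxOf v + 1) := by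
  have hc := getD_dedup_append_cons (c := v + 1) hA (fun b hb => Nat.lt_succ_of_le (hB b hb))
  have hk : (A ++ (v + 1) :: B).countP (fun a => decide (v + 1 ≤ a)) = A.length + 1 := by
    rw [countP_append, countP_cons_of_pos (by simp),
      countP_eq_length.2 (by simpa using hA), countP_eq_zero.2 (by simpa using hB)]
  simp only [partUnmap, hc, hk]
  simp [hv.ne']

theorem partUnmap_append_one {l : List ℕ} (hl : ∀ a ∈ l, 0 < a) :
    partUnmap (l ++ [1]) (l ++ [1]).dedup.length = (l, l.dedup.length + 1) := by
  have hc := getD_dedup_append_cons (A := l) (B := []) (c := 1) hl (by simp)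
  have hk : (l ++ [1]).countP (fun a => decide (1 ≤ a)) = l.length + 1 := by
    rw [countP_append, (countP_eq_length (p := fun a => decide (1 ≤ a))).2 fun a ha =>
      decide_eq_true (hl a ha)]
    rfl
  have h0 : 0 ∉ l.dedup := fun h => (hl 0 (mem_dedup.1 h)).false
  simp only [partUnmap, hc, hk]
  simp [idxOf_of_notMem h0]

theorem partMap_mem_and_partUnmap_partMap {n i : ℕ} {l : List ℕ} (hl : IsPartitionOf n l)
    (hi₁ : 1 ≤ i) (hi₂ : i ≤ l.dedup.length + 1) :
    (IsPartitionOf (n + 1) (partMap l i).1 ∧ 1 ≤ (partMap l i).2 ∧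
      (partMap l i).2 ≤ (partMap l i).1.dedup.length) ∧
    partUnmap (partMap l i).1 (partMap l i).2 = (l, i) := by
  rcases hi₂.eq_or_lt with rfl | hi₂
  · rw [partMap_dedup_length_add_one hl.1]
    refine ⟨⟨isPartitionOf_append_one_iff.1 hl, ?_, le_rfl⟩, partUnmap_append_one hl.1⟩
    exact length_pos_iff.2 (by simp [dedup_eq_nil])
  have hi : i - 1 < l.dedup.length := by omega
  obtain ⟨v, hiv⟩ : ∃ v, l.dedup[i - 1] = v := ⟨_, rfl⟩
  obtain ⟨A, B, rfl, hA, hB⟩ :=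
    hl.2.1.exists_eq_append_cons_of_lt_of_le (hiv ▸ mem_dedup.1 (getElem_mem hi))
  have hv : 0 < v := hl.1 v (by simp)
  have hj := getElem?_dedup_append_cons (c := v + 1) hA (fun b hb => Nat.lt_succ_of_le (hB b hb))
  have hidx : (A ++ v :: B).dedup.idxOf v = i - 1 := by
    rw [← (nodup_dedup _).idxOf_getElem _ hi, hiv]
  rw [partMap_append_cons hA hB (by rw [getD_eq_getElem _ _ hi, hiv]),
    partUnmap_append_cons hA hB hv, hidx, Nat.sub_add_cancel hi₁]
  refine ⟨⟨(isPartitionOf_append_cons_iff hA hB hv).1 hl, ?_, ?_⟩, rfl⟩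
  · exact length_pos_iff.2 (by simp [dedup_eq_nil])
  · have := (List.getElem?_eq_some_iff.1 hj).1
    dsimp only
    omega

theorem partUnmap_mem_and_partMap_partUnmap {n j : ℕ} {μ : List ℕ}
    (hμ : IsPartitionOf (n + 1) μ) (hj₁ : 1 ≤ j) (hj₂ : j ≤ μ.dedup.length) :
    (IsPartitionOf n (partUnmap μ j).1 ∧ 1 ≤ (partUnmap μ j).2 ∧
      (partUnmap μ j).2 ≤ (partUnmap μ j).1.dedup.length + 1) ∧
    partMap (partUnmap μ j).1 (partUnmap μ j).2 = (μ, j) := by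
  obtain ⟨A, c, B, rfl, hA, hB, rfl⟩ :=
    hμ.2.1.exists_eq_append_cons_of_le_dedup_length hj₁ hj₂
  obtain ⟨v, rfl⟩ : ∃ v, c = v + 1 := ⟨c - 1, by have := hμ.1 c (by simp); omega⟩
  have hB' : ∀ b ∈ B, b ≤ v := fun b hb => Nat.lt_succ_iff.1 (hB b hb)
  rcases v.eq_zero_or_pos with rfl | hv
  · obtain rfl : B = [] := eq_nil_iff_forall_not_mem.2 fun b hb =>
      (hμ.1 b (by simp [hb])).ne' (Nat.le_zero.1 (hB' b hb))
    have hA' : ∀ a ∈ A, 0 < a := hA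
    rw [partUnmap_append_one hA']
    exact ⟨⟨isPartitionOf_append_one_iff.2 hμ, by omega, le_rfl⟩,
      partMap_dedup_length_add_one hA'⟩
  · have hA' : ∀ a ∈ A, v < a := hA
    have hvmem : v ∈ (A ++ v :: B).dedup := mem_dedup.2 (by simp)
    rw [partUnmap_append_cons hA' hB' hv]
    refine ⟨⟨(isPartitionOf_append_cons_iff hA' hB' hv).2 hμ, by omega,
      Nat.succ_le_succ idxOf_le_length⟩, partMap_append_cons hA' hB' ?_⟩
    rw [Nat.add_sub_cancel, getD_eq_getElem _ _ (idxOf_lt_length_of_mem hvmem), getElem_idxOf]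

theorem stmt17_general (n : ℕ) :
    Set.BijOn (fun p : List ℕ × ℕ => partMap p.1 p.2)
      {p : List ℕ × ℕ | IsPartitionOf n p.1 ∧ 1 ≤ p.2 ∧ p.2 ≤ p.1.dedup.length + 1}
      {q : List ℕ × ℕ | IsPartitionOf (n + 1) q.1 ∧ 1 ≤ q.2 ∧ q.2 ≤ q.1.dedup.length} := by
  refine Set.InvOn.bijOn (f' := fun q => partUnmap q.1 q.2) ⟨?_, ?_⟩ ?_ ?_
  · rintro ⟨l, i⟩ ⟨hl, hi₁, hi₂⟩
    exact (partMap_mem_and_partUnmap_partMap hl hi₁ hi₂).2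
  · rintro ⟨μ, j⟩ ⟨hμ, hj₁, hj₂⟩
    exact (partUnmap_mem_and_partMap_partUnmap hμ hj₁ hj₂).2
  · rintro ⟨l, i⟩ ⟨hl, hi₁, hi₂⟩
    exact (partMap_mem_and_partUnmap_partMap hl hi₁ hi₂).1
  · rintro ⟨μ, j⟩ ⟨hμ, hj₁, hj₂⟩
    exact (partUnmap_mem_and_partMap_partUnmap hμ hj₁ hj₂).1

/-- The map `(λ, i) ↦ (λ̄, j)` is a bijection from
`{(λ, i) : λ ⊢ n, 1 ≤ i ≤ s(λ)+1}` onto `{(λ̄, j) : λ̄ ⊢ n+1, 1 ≤ j ≤ r(λ̄)}`. -/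
theorem stmt17 (n : ℕ) (hn : 1 ≤ n) :
    Set.BijOn (fun p : List ℕ × ℕ => partMap p.1 p.2)
      {p : List ℕ × ℕ | IsPartitionOf n p.1 ∧ 1 ≤ p.2 ∧ p.2 ≤ p.1.dedup.length + 1}
      {q : List ℕ × ℕ | IsPartitionOf (n + 1) q.1 ∧ 1 ≤ q.2 ∧ q.2 ≤ q.1.dedup.length} :=
  stmt17_general n
end
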